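/- arXiv:2212.03142 — 2 statements merged into one kernel-verified Lean document; each statement's English description precedes it below -/
import Mathlib

section
/- Let w be a complex number with |w| ≥ 2. Then the set of irreducible λ-quiddities over ⟨w⟩ is exactly {(0, kw, 0, −kw) : k ∈ ℤ} ∪ {(kw, 0, −kw, 0) : k ∈ ℤ}. -/
open Matrix Polynomial

noncomputable section

/-- The elementary matrix [[a, -1], [1, 0]]. -/
def matE (a : ℂ) : Matrix (Fin 2) (Fin 2) ℂ := !![a, -1; 1, 0]

/-- M_n(a_1, …, a_n) = matE a_n * matE a_{n-1} * ⋯ * matE a_1, for the list [a_1, …, a_n]. -/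
def Mlist (l : List ℂ) : Matrix (Fin 2) (Fin 2) ℂ := (l.reverse.map matE).prod

/-- A λ-quiddity over R : a nonempty tuple of elements of R with M_n(a_1,…,a_n) = ±Id. -/
def IsQuiddity (R : Set ℂ) (l : List ℂ) : Prop :=
  l ≠ [] ∧ (∀ x ∈ l, x ∈ R) ∧ (Mlist l = 1 ∨ Mlist l = -1)

/-- (a_1,…,a_n) ⊕ (b_1,…,b_m) := (a_1+b_m, a_2,…,a_{n-1}, a_n+b_1, b_2,…,b_{m-1}). -/
def oplus (a b : List ℂ) : List ℂ :=
  (a.headI + b.getLastD 0) ::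
    (a.tail.dropLast ++ (a.getLastD 0 + b.headI) :: b.tail.dropLast)

/-- b is obtained from a by a cyclic permutation of a or of the reversal of a. -/
def CyclicEquiv (a b : List ℂ) : Prop :=
  (∃ k, b = a.rotate k) ∨ (∃ k, b = a.reverse.rotate k)

/-- A λ-quiddity c over R is reducible if c ∼ (a_1,…,a_m) ⊕ (b_1,…,b_l) with
(a_1,…,a_m) a tuple of elements of R, (b_1,…,b_l) a λ-quiddity over R, m ≥ 3 and l ≥ 3. -/
def ReducibleQuiddity (R : Set ℂ) (c : List ℂ) : Prop :=
  ∃ a b : List ℂ, (∀ x ∈ a, x ∈ R) ∧ IsQuiddity R b ∧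
    3 ≤ a.length ∧ 3 ≤ b.length ∧ CyclicEquiv c (oplus a b)

/-- The irreducible λ-quiddities over R : the λ-quiddities of size ≥ 3 which are not
reducible (those of size < 3, i.e. (0,0), are by convention not irreducible). -/
def IrreducibleQuiddity (R : Set ℂ) (c : List ℂ) : Prop :=
  IsQuiddity R c ∧ 3 ≤ c.length ∧ ¬ ReducibleQuiddity R c

/-- The subgroup ⟨w⟩ = {kw : k ∈ ℤ} of (ℂ, +), as a set. -/
def subgroupGen (w : ℂ) : Set ℂ := {x | ∃ k : ℤ, x = (k : ℂ) * w}

end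

/-! In a nonempty product of matrices [[a, -1], [1, 0]] with all |a| ≥ 2 the entries grow, and
the lower-left entry has modulus ≥ 1, so the product is not ±Id. As the nonzero elements of ⟨w⟩
have modulus ≥ |w| ≥ 2, every λ-quiddity over ⟨w⟩ contains a 0. Cyclically, such a quiddity
reads (x, 0, y, c₄, …, cₙ), and (x, 0, y, c₄, …, cₙ) = (-y, 0, y, 0) ⊕ (c₄, …, cₙ, x + y), where
the second summand is again a λ-quiddity because
[[y, -1], [1, 0]] [[0, -1], [1, 0]] [[x, -1], [1, 0]] = -[[x + y, -1], [1, 0]]; hence it is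
reducible as soon as n ≥ 5. For n = 3 the middle entry would be ±1, which is impossible, so an
irreducible quiddity has size 4, and solving M₄ = ±Id over ⟨w⟩ leaves the two families
(M₄ = -Id would force c₂c₃ = 2, while |c₂c₃| ≥ 4 or c₂c₃ = 0). -/

lemma Matrix.mul_eq_one_or_neg_one_comm {n R : Type*} [Fintype n] [DecidableEq n] [CommRing R]
    {A B : Matrix n n R} (h : A * B = 1 ∨ A * B = -1) : B * A = 1 ∨ B * A = -1 := by
  refine h.imp mul_eq_one_comm.mp fun h => ?_
  have : -B * A = 1 := mul_eq_one_comm.mp (by rw [mul_neg, h, neg_neg])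
  rwa [neg_mul, neg_eq_iff_eq_neg] at this

lemma Mlist_append (l₁ l₂ : List ℂ) : Mlist (l₁ ++ l₂) = Mlist l₂ * Mlist l₁ := by
  simp [Mlist]

lemma Mlist_cons (x : ℂ) (l : List ℂ) : Mlist (x :: l) = Mlist l * matE x := by
  simp [Mlist]

lemma Mlist_concat (l : List ℂ) (x : ℂ) : Mlist (l ++ [x]) = matE x * Mlist l := by
  simp [Mlist]

lemma Mlist_three_one_one (x y z : ℂ) : Mlist [x, y, z] 1 1 = -y := by
  simp [Mlist, matE, Matrix.mul_apply, Fin.sum_univ_two]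

lemma Mlist_four (a b c d : ℂ) :
    Mlist [a, b, c, d] = !![(d * c - 1) * (b * a - 1) - d * a, d - b * (d * c - 1);
                            c * (b * a - 1) - a, 1 - c * b] := by
  simp only [Mlist, List.reverse_cons, List.reverse_nil, List.nil_append, List.cons_append,
    List.map_cons, List.map_nil, List.prod_cons, List.prod_nil, mul_one, matE, Matrix.mul_fin_two]
  ext i j
  fin_cases i <;> fin_cases j <;> simp <;> ring

lemma Mlist_four_eq_one_iff (a b c d : ℂ) :
    Mlist [a, b, c, d] = 1 ↔ (b = 0 ∧ c = -a ∧ d = 0) ∨ (a = 0 ∧ c = 0 ∧ d = -b) := by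
  rw [Mlist_four, ← Matrix.ext_iff, Fin.forall_fin_two, Fin.forall_fin_two, Fin.forall_fin_two]
  simp only [Matrix.of_apply, Matrix.cons_val', Matrix.cons_val_zero, Matrix.cons_val_one,
    Matrix.empty_val', Matrix.cons_val_fin_one, Matrix.one_apply_eq, Matrix.one_apply_ne,
    ne_eq, zero_ne_one, one_ne_zero, not_false_eq_true]
  constructor
  · rintro ⟨⟨-, e01⟩, e10, e11⟩
    rcases mul_eq_zero.mp (by linear_combination -e11 : c * b = 0) with rfl | rfl
    · right
      exact ⟨by linear_combination -e10, rfl, by linear_combination e01⟩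
    · left
      exact ⟨rfl, by linear_combination -e10, by linear_combination e01⟩
  · rintro (⟨rfl, rfl, rfl⟩ | ⟨rfl, rfl, rfl⟩) <;> norm_num

lemma mul_eq_two_of_Mlist_four_eq_neg_one {a b c d : ℂ} (h : Mlist [a, b, c, d] = -1) :
    c * b = 2 := by
  have := congrFun (congrFun h 1) 1
  rw [Mlist_four] at this
  simp at this
  linear_combination -this

lemma Mlist_cons_zero_cons (x y : ℂ) (l : List ℂ) :
    Mlist (x :: 0 :: y :: l) = -Mlist ((x + y) :: l) := by
  have hblock : matE y * (matE 0 * matE x) = -matE (x + y) := by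
    ext i j
    fin_cases i <;> fin_cases j <;> simp [matE, Matrix.mul_apply, Fin.sum_univ_two]
  rw [Mlist_cons, Mlist_cons, Mlist_cons, Mlist_cons, mul_assoc, mul_assoc, hblock, mul_neg]

lemma norm_Mlist_one_zero_add_one_le {l : List ℂ} (hl : ∀ x ∈ l, 2 ≤ ‖x‖) :
    ‖Mlist l 1 0‖ + 1 ≤ ‖Mlist l 0 0‖ := by
  induction l using List.reverseRecOn with
  | nil => simp [Mlist]
  | append_singleton l x ih =>
    have hx : 2 ≤ ‖x‖ := hl x (by simp)
    have ih := ih fun y hy => hl y (by simp [hy])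
    have e10 : (matE x * Mlist l) 1 0 = Mlist l 0 0 := by
      simp [matE, Matrix.mul_apply, Fin.sum_univ_two]
    have e00 : (matE x * Mlist l) 0 0 = x * Mlist l 0 0 - Mlist l 1 0 := by
      simp [matE, Matrix.mul_apply, Fin.sum_univ_two, sub_eq_add_neg]
    rw [Mlist_concat, e10, e00]
    calc ‖Mlist l 0 0‖ + 1 ≤ 2 * ‖Mlist l 0 0‖ - ‖Mlist l 1 0‖ := by linarith
      _ ≤ ‖x * Mlist l 0 0‖ - ‖Mlist l 1 0‖ := by
        rw [norm_mul]; nlinarith [norm_nonneg (Mlist l 0 0)]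
      _ ≤ ‖x * Mlist l 0 0 - Mlist l 1 0‖ := norm_sub_norm_le _ _

namespace IsQuiddity

variable {R : Set ℂ} {l : List ℂ}

lemma rotate (hq : IsQuiddity R l) (k : ℕ) : IsQuiddity R (l.rotate k) := by
  obtain ⟨hne, hmem, hM⟩ := hq
  refine ⟨by simpa using hne, fun x hx => hmem x (List.mem_rotate.mp hx), ?_⟩
  rw [← List.take_append_drop (k % l.length) l, Mlist_append] at hM
  rw [List.rotate_eq_drop_append_take_mod, Mlist_append]
  exact Matrix.mul_eq_one_or_neg_one_comm hM

lemma of_cons_zero_cons {S : AddSubgroup ℂ} {x y : ℂ} (hq : IsQuiddity S (x :: 0 :: y :: l)) :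
    IsQuiddity S ((x + y) :: l) := by
  obtain ⟨-, hmem, hM⟩ := hq
  refine ⟨List.cons_ne_nil _ _, ?_, ?_⟩
  · simp only [List.mem_cons, forall_eq_or_imp] at hmem ⊢
    exact ⟨S.add_mem hmem.1 hmem.2.2.1, hmem.2.2.2⟩
  · simp only [Mlist_cons_zero_cons, neg_eq_iff_eq_neg, neg_neg] at hM
    exact hM.symm

end IsQuiddity

lemma List.exists_rotate_eq_cons_cons_of_mem {α : Type*} {a : α} {l : List α} (ha : a ∈ l)
    (hl : 2 ≤ l.length) : ∃ k x m, l.rotate k = x :: a :: m := by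
  obtain ⟨s, t, rfl⟩ := List.append_of_mem ha
  rcases List.eq_nil_or_concat' s with rfl | ⟨s, x, rfl⟩
  · obtain ⟨t, x, rfl⟩ := (List.eq_nil_or_concat' t).resolve_left (by rintro rfl; simp at hl)
    exact ⟨(a :: t).length, x, t, List.rotate_append_length_eq (a :: t) [x]⟩
  · exact ⟨s.length, x, t ++ s, by simp⟩

lemma oplus_neg_zero_self_zero (x y z : ℂ) (l : List ℂ) :
    oplus [-y, 0, y, 0] (z :: l ++ [x + y]) = x :: 0 :: y :: z :: l := by
  simp [oplus, List.getLast?_cons]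

lemma CyclicEquiv.length_eq {a b : List ℂ} (h : CyclicEquiv a b) : b.length = a.length := by
  rcases h with ⟨k, rfl⟩ | ⟨k, rfl⟩ <;> simp

lemma length_oplus {a b : List ℂ} (ha : 2 ≤ a.length) (hb : 2 ≤ b.length) :
    (oplus a b).length = a.length + b.length - 2 := by
  simp [oplus]
  omega

lemma reducibleQuiddity_of_zero_mem {S : AddSubgroup ℂ} {c : List ℂ} (hq : IsQuiddity S c)
    (h0 : (0 : ℂ) ∈ c) (h5 : 5 ≤ c.length) : ReducibleQuiddity S c := by
  obtain ⟨k, x, m, hk⟩ := List.exists_rotate_eq_cons_cons_of_mem h0 (by omega)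
  have hlen := congrArg List.length hk
  rw [List.length_rotate] at hlen
  obtain ⟨y, z, l, rfl⟩ : ∃ y z l, m = y :: z :: l := by
    rcases m with _ | ⟨y, _ | ⟨z, l⟩⟩
    · simp at hlen; omega
    · simp at hlen; omega
    · exact ⟨y, z, l, rfl⟩
  have hrot : IsQuiddity S (x :: 0 :: y :: z :: l) := hk ▸ hq.rotate k
  have hy : y ∈ S := hrot.2.1 y (by simp)
  refine ⟨[-y, 0, y, 0], z :: l ++ [x + y], ?_, ?_, by simp, by simp at hlen ⊢; omega,
    Or.inl ⟨k, by rw [hk, oplus_neg_zero_self_zero]⟩⟩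
  · simp [S.neg_mem hy, S.zero_mem, hy]
  · simpa using hrot.of_cons_zero_cons.rotate 1

lemma subgroupGen_eq_zmultiples (w : ℂ) : subgroupGen w = AddSubgroup.zmultiples w := by
  ext x
  simp [subgroupGen, AddSubgroup.mem_zmultiples_iff, eq_comm]

section Zmultiples

open AddSubgroup

variable {w : ℂ}

lemma norm_le_norm_of_mem_zmultiples {x : ℂ} (hx : x ∈ zmultiples w) (h0 : x ≠ 0) :
    ‖w‖ ≤ ‖x‖ := by
  obtain ⟨k, rfl⟩ := mem_zmultiples_iff.mp hx
  have hk : k ≠ 0 := by rintro rfl; simp at h0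
  rw [norm_zsmul ℝ, Int.norm_cast_real]
  exact le_mul_of_one_le_left (norm_nonneg w) (by
    rw [Int.norm_eq_abs]; exact_mod_cast Int.one_le_abs hk)

variable (hw : 2 ≤ ‖w‖)
include hw

lemma two_le_norm_of_mem_zmultiples {x : ℂ} (hx : x ∈ zmultiples w) (h0 : x ≠ 0) : 2 ≤ ‖x‖ :=
  hw.trans (norm_le_norm_of_mem_zmultiples hx h0)

lemma zero_mem_of_isQuiddity {c : List ℂ} (hq : IsQuiddity (zmultiples w) c) : (0 : ℂ) ∈ c := by
  obtain ⟨hne, hmem, hM⟩ := hq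
  by_contra h0
  obtain ⟨l, x, rfl⟩ := (List.eq_nil_or_concat' c).resolve_left hne
  have hl : ∀ y ∈ l, 2 ≤ ‖y‖ := fun y hy =>
    two_le_norm_of_mem_zmultiples hw (hmem y (by simp [hy])) (by rintro rfl; simp [hy] at h0)
  have h10 : Mlist (l ++ [x]) 1 0 = Mlist l 0 0 := by
    simp [Mlist_concat, matE, Matrix.mul_apply, Fin.sum_univ_two]
  have h00 : Mlist l 0 0 = 0 := by rw [← h10]; rcases hM with h | h <;> simp [h]
  have := norm_Mlist_one_zero_add_one_le hl
  rw [h00, norm_zero] at this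
  linarith [norm_nonneg (Mlist l 1 0)]

lemma not_isQuiddity_of_length_eq_three {c : List ℂ} (hc : c.length = 3) :
    ¬ IsQuiddity (zmultiples w) c := by
  obtain ⟨x, y, z, rfl⟩ := List.length_eq_three.mp hc
  rintro ⟨-, hmem, hM⟩
  have hy : ‖y‖ = 1 := by
    rw [← norm_neg, ← Mlist_three_one_one x y z]
    rcases hM with h | h <;> simp [h]
  have := two_le_norm_of_mem_zmultiples hw (hmem y (by simp)) (by rintro rfl; simp at hy)
  linarith

lemma mul_ne_two_of_mem_zmultiples {x y : ℂ} (hx : x ∈ zmultiples w) (hy : y ∈ zmultiples w) :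
    x * y ≠ 2 := by
  intro h
  have hx2 := two_le_norm_of_mem_zmultiples hw hx (by rintro rfl; simp at h)
  have hy2 := two_le_norm_of_mem_zmultiples hw hy (by rintro rfl; simp at h)
  have : ‖x‖ * ‖y‖ = 2 := by rw [← norm_mul, h]; norm_num
  nlinarith

lemma isQuiddity_iff_of_length_eq_four {c : List ℂ} (hc : c.length = 4) :
    IsQuiddity (zmultiples w) c ↔
      (∃ k : ℤ, c = [0, (k : ℂ) * w, 0, -((k : ℂ) * w)]) ∨
        ∃ k : ℤ, c = [(k : ℂ) * w, 0, -((k : ℂ) * w), 0] := by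
  obtain ⟨a, b, c, d, rfl⟩ := List.length_eq_four.mp hc
  constructor
  · rintro ⟨-, hmem, hM | hM⟩
    · simp only [List.mem_cons, forall_eq_or_imp] at hmem
      rcases (Mlist_four_eq_one_iff a b c d).mp hM with ⟨rfl, rfl, rfl⟩ | ⟨rfl, rfl, rfl⟩
      · obtain ⟨k, rfl⟩ := mem_zmultiples_iff.mp hmem.1
        exact Or.inr ⟨k, by simp [zsmul_eq_mul]⟩
      · obtain ⟨k, rfl⟩ := mem_zmultiples_iff.mp hmem.2.1
        exact Or.inl ⟨k, by simp [zsmul_eq_mul]⟩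
    · exact absurd (mul_eq_two_of_Mlist_four_eq_neg_one hM)
        (mul_ne_two_of_mem_zmultiples hw (hmem c (by simp)) (hmem b (by simp)))
  · rintro (⟨k, h⟩ | ⟨k, h⟩) <;> rw [h] <;>
      refine ⟨List.cons_ne_nil _ _, ?_, Or.inl ((Mlist_four_eq_one_iff _ _ _ _).mpr (by simp))⟩ <;>
      simp

lemma not_reducibleQuiddity_of_length_eq_four {c : List ℂ} (hc : c.length = 4) :
    ¬ ReducibleQuiddity (zmultiples w) c := by
  rintro ⟨a, b, -, hb, ha3, hb3, hcb⟩
  have := hcb.length_eq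
  rw [length_oplus (by omega) (by omega)] at this
  exact not_isQuiddity_of_length_eq_three hw (by omega) hb

lemma length_eq_four_of_irreducibleQuiddity {c : List ℂ}
    (hc : IrreducibleQuiddity (zmultiples w) c) : c.length = 4 := by
  obtain ⟨hq, h3, hirr⟩ := hc
  have : c.length ≠ 3 := fun h => not_isQuiddity_of_length_eq_three hw h hq
  have : c.length < 5 := by
    by_contra! h5
    exact hirr (reducibleQuiddity_of_zero_mem hq (zero_mem_of_isQuiddity hw hq) h5)
  omega

end Zmultiples

theorem stmt17 (w : ℂ) (hw : 2 ≤ ‖w‖) :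
    {c : List ℂ | IrreducibleQuiddity (subgroupGen w) c} =
      {c : List ℂ | ∃ k : ℤ, c = [0, (k : ℂ) * w, 0, -((k : ℂ) * w)]} ∪
      {c : List ℂ | ∃ k : ℤ, c = [(k : ℂ) * w, 0, -((k : ℂ) * w), 0]} := by
  ext c
  rw [subgroupGen_eq_zmultiples]
  constructor
  · intro hc
    exact (isQuiddity_iff_of_length_eq_four hw (length_eq_four_of_irreducibleQuiddity hw hc)).mp
      hc.1
  · intro hc
    have h4 : c.length = 4 := by rcases hc with ⟨k, rfl⟩ | ⟨k, rfl⟩ <;> rfl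
    exact ⟨(isQuiddity_iff_of_length_eq_four hw h4).mpr hc, by omega,
      not_reducibleQuiddity_of_length_eq_four hw h4⟩
end

section
/- (Cuntz–Holm) The set of irreducible λ-quiddities over ℤ is exactly {(1,1,1), (−1,−1,−1)} ∪ {(0, m, 0, −m) : m ∈ ℤ, m ≠ ±1} ∪ {(m, 0, −m, 0) : m ∈ ℤ, m ≠ ±1}. -/
open Matrix Polynomial

section Aux

lemma Mlist_cut1 : Mlist [(1:ℂ),1,1] = -1 := by
  ext i j; fin_cases i <;> fin_cases j <;>
    simp [Mlist, matE, Matrix.mul_apply, Fin.sum_univ_two, Matrix.one_apply]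

lemma Mlist_cutm1 : Mlist [(-1:ℂ),-1,-1] = 1 := by
  ext i j; fin_cases i <;> fin_cases j <;>
    simp [Mlist, matE, Matrix.mul_apply, Fin.sum_univ_two, Matrix.one_apply]

lemma Mlist_q1 (m : ℂ) : Mlist [m,0,-m,0] = 1 := by
  ext i j; fin_cases i <;> fin_cases j <;>
    simp [Mlist, matE, Matrix.mul_apply, Fin.sum_univ_two, Matrix.one_apply]

lemma Mlist_q2 (m : ℂ) : Mlist [0,m,0,-m] = 1 := by
  ext i j; fin_cases i <;> fin_cases j <;>
    simp [Mlist, matE, Matrix.mul_apply, Fin.sum_univ_two, Matrix.one_apply]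

lemma Mlist_entry10 {l : List ℂ} (h : Mlist l = 1 ∨ Mlist l = -1) : Mlist l 1 0 = 0 := by
  rcases h with h | h <;> rw [h] <;> simp [Matrix.one_apply]

lemma Mlist_big (l : List ℂ) (x : ℂ)
    (h : ∀ a ∈ l ++ [x], ∃ k : ℤ, a = (k : ℂ) ∧ 2 ≤ |k|) :
    ∃ p q : ℤ, Mlist (l ++ [x]) 0 0 = p ∧ Mlist (l ++ [x]) 1 0 = q ∧ 1 ≤ |q| ∧ |q| < |p| := by
  induction l using List.reverseRecOn generalizing x with
  | nil =>
    obtain ⟨k, hk, hk2⟩ := h x (by simp)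
    exact ⟨k, 1, by simp [Mlist, matE, hk], by simp [Mlist, matE], by simp,
      by rw [abs_one]; omega⟩
  | append_singleton l y ih =>
    obtain ⟨p, q, hp, hq, h1, h2⟩ := ih y (fun a ha => h a (by simp at ha ⊢; tauto))
    obtain ⟨k, hk, hk2⟩ := h x (by simp)
    refine ⟨k * p - q, p, ?_, ?_, by omega, ?_⟩
    · rw [Mlist_concat]
      simp [matE, Matrix.mul_apply, Fin.sum_univ_two, hp, hq, hk]
      push_cast; ring
    · rw [Mlist_concat]
      simp [matE, Matrix.mul_apply, Fin.sum_univ_two, hp, hq, hk]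
    · have hmul : |k * p| = |k| * |p| := abs_mul k p
      have hsub : |k * p| - |q| ≤ |k * p - q| := abs_sub_abs_le_abs_sub _ _
      nlinarith [abs_nonneg p, abs_nonneg q]

lemma three_class {x y z : ℂ} (h : Mlist [x, y, z] = 1 ∨ Mlist [x, y, z] = -1) :
    (x = 1 ∧ y = 1 ∧ z = 1) ∨ (x = -1 ∧ y = -1 ∧ z = -1) := by
  rcases h with h | h
  · have h01 := congrFun (congrFun h 0) 1
    have h10 := congrFun (congrFun h 1) 0
    have h11 := congrFun (congrFun h 1) 1
    simp [Mlist, matE, Matrix.mul_apply, Fin.sum_univ_two, Matrix.one_apply] at h01 h10 h11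
    refine Or.inr ⟨?_, by linear_combination -h11, ?_⟩
    · linear_combination -h10 - x * h11
    · linear_combination h01 - z * h11
  · have h01 := congrFun (congrFun h 0) 1
    have h10 := congrFun (congrFun h 1) 0
    have h11 := congrFun (congrFun h 1) 1
    simp [Mlist, matE, Matrix.mul_apply, Fin.sum_univ_two, Matrix.one_apply,
      Matrix.neg_apply] at h01 h10 h11
    refine Or.inl ⟨?_, h11, ?_⟩
    · linear_combination h10 - x * h11
    · linear_combination -h01 - z * h11

lemma quad_class {x y z w : ℂ} (h : Mlist [x, y, z, w] = 1 ∨ Mlist [x, y, z, w] = -1)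
    (hy : ∃ k : ℤ, y = (k : ℂ)) (hz : ∃ k : ℤ, z = (k : ℂ))
    (hy1 : y ≠ 1) (hy1' : y ≠ -1) (hz1 : z ≠ 1) (hz1' : z ≠ -1) :
    (y = 0 ∧ z = -x ∧ w = 0) ∨ (x = 0 ∧ z = 0 ∧ w = -y) := by
  rcases h with h | h
  · have h01 := congrFun (congrFun h 0) 1
    have h10 := congrFun (congrFun h 1) 0
    have h11 := congrFun (congrFun h 1) 1
    simp [Mlist, matE, Matrix.mul_apply, Fin.sum_univ_two, Matrix.one_apply] at h01 h10 h11
    rcases h11 with h0 | h0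
    · refine Or.inr ⟨?_, h0, ?_⟩
      · linear_combination -h10 + (y * x - 1) * h0
      · linear_combination h01 + w * y * h0
    · refine Or.inl ⟨h0, ?_, ?_⟩
      · linear_combination -h10 + z * x * h0
      · linear_combination h01 + w * z * h0 - h0
  · exfalso
    have h11 := congrFun (congrFun h 1) 1
    simp [Mlist, matE, Matrix.mul_apply, Fin.sum_univ_two, Matrix.one_apply,
      Matrix.neg_apply] at h11
    obtain ⟨p, hp⟩ := hy
    obtain ⟨q, hq⟩ := hz
    have hzy : z * y = 2 := by linear_combination -h11
    rw [hp, hq] at hzy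
    have hpq : q * p = 2 := by exact_mod_cast hzy
    have hp1 : p ≠ 1 := fun hh => hy1 (by rw [hp, hh]; norm_num)
    have hp1' : p ≠ -1 := fun hh => hy1' (by rw [hp, hh]; push_cast; ring)
    have hq1 : q ≠ 1 := fun hh => hz1 (by rw [hq, hh]; norm_num)
    have hq1' : q ≠ -1 := fun hh => hz1' (by rw [hq, hh]; push_cast; ring)
    have hp0 : p ≠ 0 := by rintro rfl; omega
    have hq0 : q ≠ 0 := by rintro rfl; omega
    have h2p : 2 ≤ p.natAbs := by omega
    have h2q : 2 ≤ q.natAbs := by omega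
    have hmul : (q * p).natAbs = q.natAbs * p.natAbs := Int.natAbs_mul q p
    have h4 : 4 ≤ q.natAbs * p.natAbs := Nat.mul_le_mul h2q h2p
    omega

lemma oplus_length (a b : List ℂ) (ha : 2 ≤ a.length) (hb : 2 ≤ b.length) :
    (oplus a b).length = a.length + b.length - 4 + 2 := by
  simp [oplus]
  omega

lemma getLast_aux (h w : ℂ) (L : List ℂ) : (h :: (L ++ [w])).getLast?.getD 0 = w := by
  have e : (h :: (L ++ [w])) = (h :: L) ++ [w] := by simp
  rw [e, List.getLast?_concat]; rfl

lemma oplus_concat4 (h : ℂ) (L : List ℂ) (w m1 m2 : ℂ) :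
    oplus ((h :: L) ++ [w]) [m1, 0, m2, 0] = h :: (L ++ [w + m1, 0, m2]) := by
  simp [oplus, getLast_aux]

lemma oplus_cut (h : ℂ) (L : List ℂ) (w e : ℂ) :
    oplus ((h :: L) ++ [w]) [e, e, e] = (h + e) :: (L ++ [w + e, e]) := by
  simp [oplus, getLast_aux]

lemma rot_last {c : List ℂ} {x : ℂ} (hx : x ∈ c) :
    ∃ (j : ℕ) (L : List ℂ), c.rotate j = L ++ [x] ∧ L.length + 1 = c.length := by
  obtain ⟨u, v, rfl⟩ := List.append_of_mem hx
  refine ⟨(u ++ [x]).length, v ++ u, ?_, ?_⟩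
  · have h1 : u ++ x :: v = (u ++ [x]) ++ v := by simp
    rw [h1, List.rotate_append_length_eq]; simp
  · simp; omega

lemma rot_two {c : List ℂ} {x : ℂ} (hx : x ∈ c) (hc : 2 ≤ c.length) :
    ∃ (j : ℕ) (L : List ℂ) (y : ℂ), c.rotate j = L ++ [x, y] ∧ L.length + 2 = c.length ∧ y ∈ c := by
  obtain ⟨u, v, rfl⟩ := List.append_of_mem hx
  rcases v with _ | ⟨y, v'⟩
  · rcases u with _ | ⟨y, u'⟩
    · simp at hc
    · refine ⟨1, u', y, ?_, by simp, by simp⟩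
      show ((y :: (u' ++ [x])).rotate 1 = u' ++ [x, y])
      rw [List.rotate_cons_succ, List.rotate_zero]
      simp
  · refine ⟨(u ++ [x, y]).length, v' ++ u, y, ?_, by simp; omega, by simp⟩
    have h1 : u ++ x :: y :: v' = (u ++ [x, y]) ++ v' := by simp
    rw [h1, List.rotate_append_length_eq]; simp

lemma cyc_len {c d : List ℂ} (h : CyclicEquiv c d) : d.length = c.length := by
  rcases h with ⟨k, rfl⟩ | ⟨k, rfl⟩ <;> simp

lemma cyc_mem {c d : List ℂ} (h : CyclicEquiv c d) {x : ℂ} (hx : x ∈ d) : x ∈ c := by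
  rcases h with ⟨k, rfl⟩ | ⟨k, rfl⟩ <;> simp_all [List.mem_rotate]

lemma mem_of_rot {c : List ℂ} {j : ℕ} {x : ℂ} (h : x ∈ c.rotate j) : x ∈ c :=
  (List.mem_rotate).1 h

lemma red_of_zero (c : List ℂ) (h5 : 5 ≤ c.length)
    (hmem : ∀ x ∈ c, x ∈ Set.range ((↑) : ℤ → ℂ)) (h0 : (0:ℂ) ∈ c) :
    ReducibleQuiddity (Set.range ((↑) : ℤ → ℂ)) c := by
  obtain ⟨j, L, y, hrot, hlen, hy⟩ := rot_two h0 (by omega)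
  rcases L with _ | ⟨d, M'⟩
  · simp at hlen; omega
  rcases M'.eq_nil_or_concat with rfl | ⟨M, z, hM⟩
  · simp at hlen; omega
  rw [List.concat_eq_append] at hM
  subst hM
  simp at hlen
  obtain ⟨ky, hky⟩ := hmem y hy
  have hdc : d ∈ c := mem_of_rot (j := j) (by rw [hrot]; simp)
  have hMc : ∀ a ∈ M, a ∈ c := fun a ha => mem_of_rot (j := j) (by rw [hrot]; simp [ha])
  have hzc : z ∈ c := mem_of_rot (j := j) (by rw [hrot]; simp)
  obtain ⟨kz, hkz⟩ := hmem z hzc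
  refine ⟨(d :: M) ++ [z + y], [-y, 0, y, 0], ?_, ?_, ?_, ?_, ?_⟩
  · intro a ha
    simp at ha
    rcases ha with rfl | h | rfl
    · exact hmem a hdc
    · exact hmem a (hMc a h)
    · exact ⟨kz + ky, by push_cast [hkz, hky]; ring⟩
  · refine ⟨by simp, ?_, Or.inl ?_⟩
    · intro a ha
      simp at ha
      rcases ha with rfl | rfl | rfl | rfl
      · exact ⟨-ky, by push_cast [hky]; ring⟩
      · exact ⟨0, by norm_num⟩
      · exact ⟨ky, hky⟩
      · exact ⟨0, by norm_num⟩
    · have hq := Mlist_q1 (-y)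
      rwa [neg_neg] at hq
  · simp; omega
  · simp
  · refine Or.inl ⟨j, ?_⟩
    rw [oplus_concat4, hrot]
    have h1 : z + y + -y = z := by ring
    rw [h1]
    simp

lemma red_of_one (c : List ℂ) (h4 : 4 ≤ c.length)
    (hmem : ∀ x ∈ c, x ∈ Set.range ((↑) : ℤ → ℂ)) (e : ℂ) (he : e = 1 ∨ e = -1)
    (h1 : e ∈ c) : ReducibleQuiddity (Set.range ((↑) : ℤ → ℂ)) c := by
  obtain ⟨j, L, hrot, hlen⟩ := rot_last h1
  rcases L with _ | ⟨d, M'⟩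
  · simp at hlen; omega
  rcases M'.eq_nil_or_concat with rfl | ⟨M, z, hM⟩
  · simp at hlen; omega
  rw [List.concat_eq_append] at hM
  subst hM
  simp at hlen
  have hdc : d ∈ c := mem_of_rot (j := j) (by rw [hrot]; simp)
  have hMc : ∀ a ∈ M, a ∈ c := fun a ha => mem_of_rot (j := j) (by rw [hrot]; simp [ha])
  have hzc : z ∈ c := mem_of_rot (j := j) (by rw [hrot]; simp)
  obtain ⟨kd, hkd⟩ := hmem d hdc
  obtain ⟨kz, hkz⟩ := hmem z hzc
  obtain ⟨ke, hke⟩ : ∃ k : ℤ, ((k : ℤ) : ℂ) = e := by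
    rcases he with rfl | rfl
    · exact ⟨1, by norm_num⟩
    · exact ⟨-1, by push_cast; ring⟩
  refine ⟨(d - e) :: M ++ [z - e], [e, e, e], ?_, ?_, ?_, ?_, ?_⟩
  · intro a ha
    simp at ha
    rcases ha with rfl | h | rfl
    · exact ⟨kd - ke, by push_cast [hkd, hke]; ring⟩
    · exact hmem a (hMc a h)
    · exact ⟨kz - ke, by push_cast [hkz, hke]; ring⟩
  · refine ⟨by simp, ?_, ?_⟩
    · intro a ha
      simp at ha
      subst ha
      exact ⟨ke, hke⟩
    · rcases he with rfl | rfl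
      · exact Or.inr Mlist_cut1
      · exact Or.inl Mlist_cutm1
  · simp; omega
  · simp
  · refine Or.inl ⟨j, ?_⟩
    have hshape : (d - e) :: M ++ [z - e] = ((d - e) :: M) ++ [z - e] := by simp
    rw [hshape, oplus_cut, hrot]
    have e1 : d - e + e = d := by ring
    have e2 : z - e + e = z := by ring
    rw [e1, e2]
    simp

lemma length4 {l : List ℂ} (h : l.length = 4) : ∃ a b c d, l = [a, b, c, d] := by
  rcases l with _ | ⟨a, l⟩; · simp at h
  rcases l with _ | ⟨b, l⟩; · simp at h
  rcases l with _ | ⟨c, l⟩; · simp at h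
  rcases l with _ | ⟨d, l⟩; · simp at h
  rcases l with _ | ⟨e, l⟩
  · exact ⟨a, b, c, d, rfl⟩
  · simp at h

end Aux

theorem stmt18 :
    {c : List ℂ | IrreducibleQuiddity (Set.range ((↑) : ℤ → ℂ)) c} =
      ({[1, 1, 1], [-1, -1, -1]} : Set (List ℂ)) ∪
      {c : List ℂ | ∃ m : ℤ, m ≠ 1 ∧ m ≠ -1 ∧ c = [0, (m : ℂ), 0, -(m : ℂ)]} ∪
      {c : List ℂ | ∃ m : ℤ, m ≠ 1 ∧ m ≠ -1 ∧ c = [(m : ℂ), 0, -(m : ℂ), 0]} := by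
  ext c
  simp only [Set.mem_setOf_eq, Set.mem_union, Set.mem_insert_iff, Set.mem_singleton_iff]
  constructor
  · rintro ⟨⟨hne, hmem, hM⟩, hlen3, hirr⟩
    have hcase : c.length = 3 ∨ c.length = 4 ∨ 5 ≤ c.length := by omega
    rcases hcase with h3 | h4 | h5
    · obtain ⟨x, y, z, rfl⟩ := List.length_eq_three.1 h3
      rcases three_class hM with ⟨hx, hy, hz⟩ | ⟨hx, hy, hz⟩ <;>
        subst hx <;> subst hy <;> subst hz
      · exact Or.inl (Or.inl (Or.inl rfl))
      · exact Or.inl (Or.inl (Or.inr rfl))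
    · have hno1 : (1:ℂ) ∉ c := fun hx => hirr (red_of_one c (by omega) hmem 1 (Or.inl rfl) hx)
      have hnom1 : (-1:ℂ) ∉ c :=
        fun hx => hirr (red_of_one c (by omega) hmem (-1) (Or.inr rfl) hx)
      obtain ⟨x, y, z, w, rfl⟩ := length4 h4
      obtain ⟨ky, hky⟩ := hmem y (by simp)
      obtain ⟨kz, hkz⟩ := hmem z (by simp)
      have hy1 : y ≠ 1 := fun h => hno1 (by rw [← h]; simp)
      have hy1' : y ≠ -1 := fun h => hnom1 (by rw [← h]; simp)
      have hz1 : z ≠ 1 := fun h => hno1 (by rw [← h]; simp)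
      have hz1' : z ≠ -1 := fun h => hnom1 (by rw [← h]; simp)
      rcases quad_class hM ⟨ky, hky.symm⟩ ⟨kz, hkz.symm⟩ hy1 hy1' hz1 hz1' with
        ⟨hy0, hzx, hw0⟩ | ⟨hx0, hz0, hwy⟩
      · obtain ⟨m, hm⟩ := hmem x (by simp)
        refine Or.inr ⟨m, ?_, ?_, ?_⟩
        · rintro rfl
          exact hno1 (by rw [show (1:ℂ) = x from by rw [← hm]; norm_num]; simp)
        · rintro rfl
          exact hnom1 (by rw [show (-1:ℂ) = x from by rw [← hm]; push_cast; ring]; simp)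
        · rw [hy0, hzx, hw0, ← hm]
      · obtain ⟨m, hm⟩ := hmem y (by simp)
        refine Or.inl (Or.inr ⟨m, ?_, ?_, ?_⟩)
        · rintro rfl
          exact hno1 (by rw [show (1:ℂ) = y from by rw [← hm]; norm_num]; simp)
        · rintro rfl
          exact hnom1 (by rw [show (-1:ℂ) = y from by rw [← hm]; push_cast; ring]; simp)
        · rw [hx0, hz0, hwy, ← hm]
    · exfalso
      have hno1 : (1:ℂ) ∉ c := fun hx => hirr (red_of_one c (by omega) hmem 1 (Or.inl rfl) hx)
      have hnom1 : (-1:ℂ) ∉ c :=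
        fun hx => hirr (red_of_one c (by omega) hmem (-1) (Or.inr rfl) hx)
      have h0 : (0:ℂ) ∈ c := by
        by_contra h0
        obtain ⟨L, x, hLx⟩ : ∃ L x, c = L ++ [x] := by
          rcases c.eq_nil_or_concat with rfl | ⟨L, x, h⟩
          · exact absurd rfl hne
          · exact ⟨L, x, by rw [h, List.concat_eq_append]⟩
        have hent : ∀ a ∈ L ++ [x], ∃ k : ℤ, a = (k : ℂ) ∧ 2 ≤ |k| := by
          intro a ha
          rw [← hLx] at ha
          obtain ⟨k, hk⟩ := hmem a ha
          refine ⟨k, hk.symm, ?_⟩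
          have hk0 : k ≠ 0 := by
            rintro rfl
            exact h0 (by rw [show (0:ℂ) = a from by rw [← hk]; norm_num]; exact ha)
          have hk1 : k ≠ 1 := by
            rintro rfl
            exact hno1 (by rw [show (1:ℂ) = a from by rw [← hk]; norm_num]; exact ha)
          have hk1' : k ≠ -1 := by
            rintro rfl
            exact hnom1 (by rw [show (-1:ℂ) = a from by rw [← hk]; push_cast; ring]; exact ha)
          have h2k : 2 ≤ k.natAbs := by omega
          rw [Int.abs_eq_natAbs]; exact_mod_cast h2k
        obtain ⟨p, q, hp, hq, h1q, h2⟩ := Mlist_big L x hent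
        have h10 := Mlist_entry10 hM
        rw [hLx, hq] at h10
        have hq0 : q = 0 := by exact_mod_cast h10
        rw [hq0] at h1q; simp at h1q
      exact hirr (red_of_zero c h5 hmem h0)
  · rintro (((rfl | rfl) | ⟨m, hm1, hm2, rfl⟩) | ⟨m, hm1, hm2, rfl⟩)
    · refine ⟨⟨by simp, ?_, Or.inr Mlist_cut1⟩, by simp, ?_⟩
      · intro x hx; simp at hx; subst hx; exact ⟨1, by norm_num⟩
      · rintro ⟨a, b, ha, hb, h3a, h3b, hcyc⟩
        have hl := cyc_len hcyc
        rw [oplus_length a b (by omega) (by omega)] at hl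
        simp at hl; omega
    · refine ⟨⟨by simp, ?_, Or.inl Mlist_cutm1⟩, by simp, ?_⟩
      · intro x hx; simp at hx; subst hx; exact ⟨-1, by push_cast; ring⟩
      · rintro ⟨a, b, ha, hb, h3a, h3b, hcyc⟩
        have hl := cyc_len hcyc
        rw [oplus_length a b (by omega) (by omega)] at hl
        simp at hl; omega
    · refine ⟨⟨by simp, ?_, Or.inl (Mlist_q2 m)⟩, by simp, ?_⟩
      · intro x hx; simp at hx
        rcases hx with rfl | rfl | rfl | rfl
        · exact ⟨0, by norm_num⟩
        · exact ⟨m, rfl⟩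
        · exact ⟨0, by norm_num⟩
        · exact ⟨-m, by push_cast; ring⟩
      · rintro ⟨a, b, ha, hb, h3a, h3b, hcyc⟩
        obtain ⟨hbne, hbmem, hbM⟩ := hb
        have hl := cyc_len hcyc
        rw [oplus_length a b (by omega) (by omega)] at hl
        simp at hl
        have hb3 : b.length = 3 := by omega
        have ha3 : a.length = 3 := by omega
        obtain ⟨b1, b2, b3, rfl⟩ := List.length_eq_three.1 hb3
        obtain ⟨a1, a2, a3, rfl⟩ := List.length_eq_three.1 ha3
        obtain ⟨δ, hδ1, hδeq⟩ : ∃ δ : ℂ, (δ = 1 ∨ δ = -1) ∧ [b1,b2,b3] = [δ,δ,δ] := by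
          rcases three_class hbM with ⟨e1,e2,e3⟩ | ⟨e1,e2,e3⟩
          · exact ⟨1, Or.inl rfl, by rw [e1,e2,e3]⟩
          · exact ⟨-1, Or.inr rfl, by rw [e1,e2,e3]⟩
        rw [hδeq] at hcyc
        have hδmem : δ ∈ oplus [a1,a2,a3] [δ,δ,δ] := by simp [oplus]
        have hδc := cyc_mem hcyc hδmem
        simp at hδc
        rcases hδ1 with rfl | rfl
        · rcases hδc with h | h | h | h
          · norm_num at h
          · exact hm1 (by exact_mod_cast h.symm)
          · norm_num at h
          · refine hm2 ?_
            have : ((m:ℤ):ℂ) = ((-1:ℤ):ℂ) := by push_cast; linear_combination h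
            exact_mod_cast this
        · rcases hδc with h | h | h | h
          · norm_num at h
          · refine hm2 ?_
            have : ((m:ℤ):ℂ) = ((-1:ℤ):ℂ) := by push_cast; linear_combination -h
            exact_mod_cast this
          · norm_num at h
          · refine hm1 ?_
            have : ((m:ℤ):ℂ) = ((1:ℤ):ℂ) := by push_cast; linear_combination h
            exact_mod_cast this
    · refine ⟨⟨by simp, ?_, Or.inl (Mlist_q1 m)⟩, by simp, ?_⟩
      · intro x hx; simp at hx
        rcases hx with rfl | rfl | rfl | rfl
        · exact ⟨m, rfl⟩
        · exact ⟨0, by norm_num⟩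
        · exact ⟨-m, by push_cast; ring⟩
        · exact ⟨0, by norm_num⟩
      · rintro ⟨a, b, ha, hb, h3a, h3b, hcyc⟩
        obtain ⟨hbne, hbmem, hbM⟩ := hb
        have hl := cyc_len hcyc
        rw [oplus_length a b (by omega) (by omega)] at hl
        simp at hl
        have hb3 : b.length = 3 := by omega
        have ha3 : a.length = 3 := by omega
        obtain ⟨b1, b2, b3, rfl⟩ := List.length_eq_three.1 hb3
        obtain ⟨a1, a2, a3, rfl⟩ := List.length_eq_three.1 ha3
        obtain ⟨δ, hδ1, hδeq⟩ : ∃ δ : ℂ, (δ = 1 ∨ δ = -1) ∧ [b1,b2,b3] = [δ,δ,δ] := by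
          rcases three_class hbM with ⟨e1,e2,e3⟩ | ⟨e1,e2,e3⟩
          · exact ⟨1, Or.inl rfl, by rw [e1,e2,e3]⟩
          · exact ⟨-1, Or.inr rfl, by rw [e1,e2,e3]⟩
        rw [hδeq] at hcyc
        have hδmem : δ ∈ oplus [a1,a2,a3] [δ,δ,δ] := by simp [oplus]
        have hδc := cyc_mem hcyc hδmem
        simp at hδc
        rcases hδ1 with rfl | rfl
        · rcases hδc with h | h | h | h
          · exact hm1 (by exact_mod_cast h.symm)
          · norm_num at h
          · refine hm2 ?_
            have : ((m:ℤ):ℂ) = ((-1:ℤ):ℂ) := by push_cast; linear_combination h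
            exact_mod_cast this
          · norm_num at h
        · rcases hδc with h | h | h | h
          · refine hm2 ?_
            have : ((m:ℤ):ℂ) = ((-1:ℤ):ℂ) := by push_cast; linear_combination -h
            exact_mod_cast this
          · norm_num at h
          · refine hm1 ?_
            have : ((m:ℤ):ℂ) = ((1:ℤ):ℂ) := by push_cast; linear_combination h
            exact_mod_cast this
          · norm_num at h
end
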